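/- arXiv:1402.3990 — 3 statements merged into one kernel-verified Lean document; each statement's English description precedes it below -/
import Mathlib

section
/- Kantorovich duality restriction to Dirac perturbations: Let μ be a positive measure on compact Ω, ν = ν₊ − ν₋ balanced with ν₊(Ω)=ν₋(Ω)=1, ε>0. Then W_p^p(μ+εν₊, μ+εν₋) ≤ sup_{x₀ ∈ supp(ν₊), x₁ ∈ supp(ν₋)} W_p^p(μ+εδ_{x₀}, μ+εδ_{x₁}). -/
open MeasureTheory ENNReal NNReal

/-- The `p`-Wasserstein cost `W_p^p(μ₁,μ₂)`: Kantorovich infimum over couplings of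
`∫∫ |x-y|^p dπ`. -/
noncomputable def WpCost {E : Type*} [MeasurableSpace E] [PseudoMetricSpace E]
    (p : ℝ) (μ₁ μ₂ : Measure E) : ℝ≥0∞ :=
  ⨅ (π : Measure (E × E)) (_ : π.map Prod.fst = μ₁ ∧ π.map Prod.snd = μ₂),
    ∫⁻ z, ENNReal.ofReal (dist z.1 z.2 ^ p) ∂π

/-- The `p`-Wasserstein metric `W_p(μ₁,μ₂) = (W_p^p)^{1/p}`. -/
noncomputable def Wp {E : Type*} [MeasurableSpace E] [PseudoMetricSpace E]
    (p : ℝ) (μ₁ μ₂ : Measure E) : ℝ≥0∞ :=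
  WpCost p μ₁ μ₂ ^ (1 / p)

/-- The (topological) support of a measure: points all of whose neighborhoods have
positive measure. -/
def msupport {E : Type*} [MeasurableSpace E] [PseudoMetricSpace E] (ν : Measure E) :
    Set E := {x | ∀ r : ℝ, 0 < r → ν (Metric.ball x r) ≠ 0}

/-
Cut the supports of `ν₊` and `ν₋` into countably many measurable cells `Aᵢ`, `Bⱼ` of radius `δ`
around points `aᵢ`, `bⱼ` of the supports. Then `μ + εν₊` and `μ + εν₋` are the mixtures, with
weights `ν₊(Aᵢ)ν₋(Bⱼ)`, of `μ + εν₊[|Aᵢ]` and `μ + εν₋[|Bⱼ]`, and the transport cost of a mixture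
is at most the largest cost between its components. For one pair of cells, take a nearly optimal
plan `γ` from `μ + εδ_a` to `μ + εδ_b` and redistribute the mass that `γ` moves out of `a` over
`ν₊[|A]` (and likewise into `b` over `ν₋[|B]`). Since `t ↦ t^p` is uniformly continuous on
bounded intervals and `Ω` is bounded, this costs at most `2 (μ(Ω) + ε) e` with `e → 0` as `δ → 0`.
-/

namespace MeasureTheory

variable {E : Type*} [MeasurableSpace E]

def IsCoupling (π : Measure (E × E)) (μ₁ μ₂ : Measure E) : Prop :=
  π.map Prod.fst = μ₁ ∧ π.map Prod.snd = μ₂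

noncomputable def transportCost (c : E × E → ℝ≥0∞) (μ₁ μ₂ : Measure E) : ℝ≥0∞ :=
  ⨅ (π : Measure (E × E)) (_ : IsCoupling π μ₁ μ₂), ∫⁻ z, c z ∂π

variable {c : E × E → ℝ≥0∞} {μ₁ μ₂ ν₁ ν₂ : Measure E} {π : Measure (E × E)}

theorem IsCoupling.swap (h : IsCoupling π μ₁ μ₂) : IsCoupling (π.map Prod.swap) μ₂ μ₁ := by
  rw [IsCoupling, Measure.map_map measurable_fst measurable_swap,
    Measure.map_map measurable_snd measurable_swap]
  exact ⟨h.2, h.1⟩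

theorem transportCost_le_lintegral (h : IsCoupling π μ₁ μ₂) :
    transportCost c μ₁ μ₂ ≤ ∫⁻ z, c z ∂π :=
  iInf₂_le π h

theorem exists_isCoupling_lintegral_lt {K : ℝ≥0∞} (h : transportCost c μ₁ μ₂ < K) :
    ∃ π, IsCoupling π μ₁ μ₂ ∧ ∫⁻ z, c z ∂π < K := by
  simpa only [transportCost, iInf_lt_iff, exists_prop] using h

theorem transportCost_le_add_of_forall_isCoupling {K : ℝ≥0∞}
    (h : ∀ π, IsCoupling π μ₁ μ₂ → transportCost c ν₁ ν₂ ≤ ∫⁻ z, c z ∂π + K) :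
    transportCost c ν₁ ν₂ ≤ transportCost c μ₁ μ₂ + K := by
  simp only [transportCost, ENNReal.iInf_add] at h ⊢
  exact le_iInf₂ h

theorem transportCost_comm (hc : ∀ x y, c (x, y) = c (y, x)) (μ₁ μ₂ : Measure E) :
    transportCost c μ₁ μ₂ = transportCost c μ₂ μ₁ := by
  suffices ∀ ν₁ ν₂ : Measure E, transportCost c ν₁ ν₂ ≤ transportCost c ν₂ ν₁ from
    le_antisymm (this _ _) (this _ _)
  intro ν₁ ν₂
  refine le_iInf₂ fun π hπ => (transportCost_le_lintegral hπ.swap).trans_eq ?_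
  rw [show (Prod.swap : E × E → E × E) = MeasurableEquiv.prodComm from rfl, lintegral_map_equiv]
  exact lintegral_congr fun z => hc _ _

variable {ι κ : Type*} {w : ι → ℝ≥0∞} {w' : κ → ℝ≥0∞}

theorem IsCoupling.smul (h : IsCoupling π μ₁ μ₂) (a : ℝ≥0∞) :
    IsCoupling (a • π) (a • μ₁) (a • μ₂) := by
  rw [IsCoupling, Measure.map_smul, Measure.map_smul, h.1, h.2]
  exact ⟨rfl, rfl⟩

theorem IsCoupling.sum {π : ι → Measure (E × E)} {α β : ι → Measure E}
    (h : ∀ i, IsCoupling (π i) (α i) (β i)) :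
    IsCoupling (Measure.sum π) (Measure.sum α) (Measure.sum β) := by
  rw [IsCoupling, Measure.map_sum measurable_fst.aemeasurable,
    Measure.map_sum measurable_snd.aemeasurable]
  exact ⟨congrArg Measure.sum (funext fun i => (h i).1),
    congrArg Measure.sum (funext fun i => (h i).2)⟩

theorem Measure.sum_smul_eq_self (hw : ∑' i, w i = 1) (μ : Measure E) :
    Measure.sum (fun i => w i • μ) = μ := by
  ext s hs
  simp [Measure.sum_apply _ hs, ENNReal.tsum_mul_right, hw]

theorem transportCost_sum_smul_le (hw : ∑' i, w i = 1) (α β : ι → Measure E) :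
    transportCost c (Measure.sum fun i => w i • α i) (Measure.sum fun i => w i • β i) ≤
      ⨆ (i) (_ : w i ≠ 0), transportCost c (α i) (β i) := by
  refine le_of_forall_gt_imp_ge_of_dense fun K hK => ?_
  have hnear : ∀ i, ∃ π, w i ≠ 0 → IsCoupling π (α i) (β i) ∧ ∫⁻ z, c z ∂π < K := by
    intro i
    by_cases hi : w i = 0
    · exact ⟨0, fun h => (h hi).elim⟩
    · obtain ⟨π, hπ⟩ := exists_isCoupling_lintegral_lt
        ((le_iSup₂ (f := fun i (_ : w i ≠ 0) => transportCost c (α i) (β i)) i hi).trans_lt hK)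
      exact ⟨π, fun _ => hπ⟩
  choose π hπ using hnear
  have hcoupling : ∀ i, IsCoupling (w i • π i) (w i • α i) (w i • β i) := by
    intro i
    rcases eq_or_ne (w i) 0 with hi | hi
    · simp only [hi, zero_smul]
      exact ⟨Measure.map_zero _, Measure.map_zero _⟩
    · exact (hπ i hi).1.smul _
  calc _ ≤ ∫⁻ z, c z ∂(Measure.sum fun i => w i • π i) :=
        transportCost_le_lintegral (IsCoupling.sum hcoupling)
    _ = ∑' i, w i * ∫⁻ z, c z ∂(π i) := by
        simp only [lintegral_sum_measure, lintegral_smul_measure, smul_eq_mul]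
    _ ≤ ∑' i, w i * K := by
        refine ENNReal.tsum_le_tsum fun i => ?_
        rcases eq_or_ne (w i) 0 with hi | hi
        · simp [hi]
        · exact mul_le_mul_right (hπ i hi).2.le _
    _ = K := by rw [ENNReal.tsum_mul_right, hw, one_mul]

theorem transportCost_sum_smul_sum_smul_le (hw : ∑' i, w i = 1) (hw' : ∑' j, w' j = 1)
    (α : ι → Measure E) (β : κ → Measure E) :
    transportCost c (Measure.sum fun i => w i • α i) (Measure.sum fun j => w' j • β j) ≤
      ⨆ (i) (_ : w i ≠ 0) (j) (_ : w' j ≠ 0), transportCost c (α i) (β j) := by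
  conv_lhs => rw [← Measure.sum_smul_eq_self hw (Measure.sum fun j => w' j • β j)]
  refine (transportCost_sum_smul_le hw _ _).trans (iSup₂_mono fun i _ => ?_)
  conv_lhs => rw [← Measure.sum_smul_eq_self hw' (α i)]
  exact transportCost_sum_smul_le hw' _ _

variable {μ ρ ν : Measure E} {ε : ℝ≥0∞} {a : E}

/-- The law, given that the second point is `a`, of the first point under the plan from
`μ + ε • ρ` to `μ + ε • dirac a` that leaves `μ` in place and sends `ε • ρ` to `a`. -/
noncomputable def atomSpread (μ ρ : Measure E) (ε : ℝ≥0∞) (a : E) : Measure E :=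
  (μ {a} + ε)⁻¹ • (μ.restrict {a} + ε • ρ)

theorem isProbabilityMeasure_atomSpread [IsFiniteMeasure μ] [IsProbabilityMeasure ρ]
    (hε₀ : ε ≠ 0) (hε : ε ≠ ∞) : IsProbabilityMeasure (atomSpread μ ρ ε a) := by
  have hq₀ : μ {a} + ε ≠ 0 := by simp [hε₀]
  have hq : μ {a} + ε ≠ ∞ := by simp [hε, measure_ne_top]
  constructor
  simp [atomSpread, ← mul_add, ENNReal.inv_mul_cancel hq₀ hq]

variable [MeasurableSingletonClass E]

theorem ae_atomSpread {A : Set E} (hρ : ∀ᵐ x ∂ρ, x ∈ A) :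
    ∀ᵐ x ∂atomSpread μ ρ ε a, x = a ∨ x ∈ A :=
  Measure.ae_smul_measure (ae_add_measure_iff.2
    ⟨(ae_restrict_mem (measurableSet_singleton a)).mono fun _ hx => Or.inl hx,
      Measure.ae_smul_measure (hρ.mono fun _ hx => Or.inr hx) _⟩) _

theorem IsCoupling.restrict_compl_add_atomSpread_prod [IsFiniteMeasure μ]
    [IsProbabilityMeasure ρ] (hε₀ : ε ≠ 0) (hε : ε ≠ ∞) {γ : Measure (E × E)}
    (hγ : IsCoupling γ (μ + ε • Measure.dirac a) ν) :
    IsCoupling (γ.restrict (Prod.fst ⁻¹' {a}ᶜ) +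
      (atomSpread μ ρ ε a).prod ((γ.restrict (Prod.fst ⁻¹' {a})).map Prod.snd)) (μ + ε • ρ) ν := by
  have hS : MeasurableSet (Prod.fst ⁻¹' {a} : Set (E × E)) :=
    measurable_fst (measurableSet_singleton a)
  have hq₀ : μ {a} + ε ≠ 0 := by simp [hε₀]
  have hq : μ {a} + ε ≠ ∞ := by simp [hε, measure_ne_top]
  have := isProbabilityMeasure_atomSpread (μ := μ) (ρ := ρ) (a := a) hε₀ hε
  have hβ : (γ.restrict (Prod.fst ⁻¹' {a})).map Prod.snd Set.univ = μ {a} + ε := by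
    rw [Measure.map_apply measurable_snd MeasurableSet.univ, Set.preimage_univ,
      Measure.restrict_apply_univ, ← Measure.map_apply measurable_fst (measurableSet_singleton a),
      hγ.1]
    simp
  have : IsFiniteMeasure ((γ.restrict (Prod.fst ⁻¹' {a})).map Prod.snd) :=
    ⟨by simpa [hβ, lt_top_iff_ne_top] using hq⟩
  constructor
  · rw [Measure.map_add _ _ measurable_fst, ← Measure.restrict_map measurable_fst
      (measurableSet_singleton a).compl, hγ.1, Measure.map_fst_prod, hβ, atomSpread, smul_smul,
      ENNReal.mul_inv_cancel hq₀ hq, one_smul,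
      Measure.restrict_add, Measure.restrict_smul, Measure.restrict_eq_zero.2
        ((dirac_eq_zero_iff_not_mem (measurableSet_singleton a).compl).2 (by simp)),
      smul_zero, add_zero, ← add_assoc, add_comm (μ.restrict _),
      Measure.restrict_add_restrict_compl (measurableSet_singleton a)]
  · rw [Measure.map_add _ _ measurable_snd, Measure.map_snd_prod, measure_univ, one_smul,
      ← Measure.map_add _ _ measurable_snd, add_comm, Set.preimage_compl,
      Measure.restrict_add_restrict_compl hS, hγ.2]

theorem lintegral_restrict_compl_add_prod_le (hc : Measurable c) {e : ℝ≥0∞} {A Ω : Set E}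
    (hcA : ∀ x ∈ A, ∀ z ∈ Ω, c (x, z) ≤ c (a, z) + e) (γ : Measure (E × E)) [IsFiniteMeasure γ]
    {Λ : Measure E} [IsProbabilityMeasure Λ] (hΛ : ∀ᵐ x ∂Λ, x = a ∨ x ∈ A)
    (hΩ : ∀ᵐ z ∂(γ.restrict (Prod.fst ⁻¹' {a})).map Prod.snd, z ∈ Ω) :
    ∫⁻ z, c z ∂(γ.restrict (Prod.fst ⁻¹' {a}ᶜ) +
        Λ.prod ((γ.restrict (Prod.fst ⁻¹' {a})).map Prod.snd)) ≤
      ∫⁻ z, c z ∂γ + (γ.restrict (Prod.fst ⁻¹' {a})).map Prod.snd Set.univ * e := by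
  set β := (γ.restrict (Prod.fst ⁻¹' {a})).map Prod.snd with hβ
  have hS : MeasurableSet (Prod.fst ⁻¹' {a} : Set (E × E)) :=
    measurable_fst (measurableSet_singleton a)
  have hae : ∀ᵐ z ∂(Λ.prod β), c z ≤ c (a, z.2) + e := by
    filter_upwards [Measure.quasiMeasurePreserving_fst.ae hΛ,
      Measure.quasiMeasurePreserving_snd.ae hΩ] with z hz₁ hz₂
    rcases hz₁ with h | h
    · rw [← h]
      exact le_self_add
    · exact hcA _ h _ hz₂
  have hca : Measurable fun y => c (a, y) := hc.comp measurable_prodMk_left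
  have hrow : ∫⁻ z, c (a, z.2) ∂(Λ.prod β) = ∫⁻ z in Prod.fst ⁻¹' {a}, c z ∂γ := by
    rw [← lintegral_map hca measurable_snd, Measure.map_snd_prod, measure_univ, one_smul, hβ,
      lintegral_map hca measurable_snd]
    exact setLIntegral_congr_fun hS fun z hz => by rw [← show z.1 = a from hz]
  calc ∫⁻ z, c z ∂(γ.restrict (Prod.fst ⁻¹' {a}ᶜ) + Λ.prod β)
      = ∫⁻ z in (Prod.fst ⁻¹' {a})ᶜ, c z ∂γ + ∫⁻ z, c z ∂(Λ.prod β) :=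
        lintegral_add_measure _ _ _
    _ ≤ ∫⁻ z in (Prod.fst ⁻¹' {a})ᶜ, c z ∂γ +
          (∫⁻ z, c (a, z.2) ∂(Λ.prod β) + β Set.univ * e) := by
        gcongr
        refine (lintegral_mono_ae hae).trans_eq ?_
        rw [lintegral_add_right _ measurable_const, lintegral_const, ← Set.univ_prod_univ,
          Measure.prod_prod, measure_univ, one_mul, mul_comm]
    _ = ∫⁻ z, c z ∂γ + β Set.univ * e := by
        rw [hrow, ← add_assoc, add_comm (∫⁻ z in _ᶜ, c z ∂γ), lintegral_add_compl _ hS]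

theorem transportCost_add_smul_le_dirac [IsFiniteMeasure μ] [IsProbabilityMeasure ρ]
    (hε₀ : ε ≠ 0) (hε : ε ≠ ∞) (hc : Measurable c) {e : ℝ≥0∞} {A Ω : Set E}
    (hρ : ∀ᵐ x ∂ρ, x ∈ A) (hν : ∀ᵐ z ∂ν, z ∈ Ω)
    (hcA : ∀ x ∈ A, ∀ z ∈ Ω, c (x, z) ≤ c (a, z) + e) :
    transportCost c (μ + ε • ρ) ν ≤
      transportCost c (μ + ε • Measure.dirac a) ν + ν Set.univ * e := by
  refine transportCost_le_add_of_forall_isCoupling fun γ hγ => ?_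
  have : IsFiniteMeasure γ := ⟨by
    rw [← Set.preimage_univ (f := Prod.fst),
      ← Measure.map_apply measurable_fst MeasurableSet.univ, hγ.1]
    simp [hε, lt_top_iff_ne_top, measure_ne_top]⟩
  have : IsProbabilityMeasure (atomSpread μ ρ ε a) := isProbabilityMeasure_atomSpread hε₀ hε
  have hβν : (γ.restrict (Prod.fst ⁻¹' {a})).map Prod.snd ≤ ν :=
    hγ.2 ▸ Measure.map_mono Measure.restrict_le_self measurable_snd
  calc transportCost c (μ + ε • ρ) ν
      ≤ _ := transportCost_le_lintegral (hγ.restrict_compl_add_atomSpread_prod hε₀ hε)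
    _ ≤ _ := lintegral_restrict_compl_add_prod_le hc hcA γ (ae_atomSpread hρ) (ae_mono hβν hν)
    _ ≤ ∫⁻ z, c z ∂γ + ν Set.univ * e := by gcongr

variable {ρ' : Measure E} {e : ℝ≥0∞} {b : E}

theorem transportCost_add_smul_le_add_smul_dirac (hc : Measurable c)
    (hc_symm : ∀ x y, c (x, y) = c (y, x)) [IsFiniteMeasure μ] [IsProbabilityMeasure ρ]
    [IsProbabilityMeasure ρ'] (hε₀ : ε ≠ 0) (hε : ε ≠ ∞) {A B Ω : Set E}
    (hρ : ∀ᵐ x ∂ρ, x ∈ A) (hρ' : ∀ᵐ x ∂ρ', x ∈ B) (hμΩ : ∀ᵐ x ∂μ, x ∈ Ω)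
    (hρ'Ω : ∀ᵐ x ∂ρ', x ∈ Ω) (ha : a ∈ Ω)
    (hcA : ∀ x ∈ A, ∀ z ∈ Ω, c (x, z) ≤ c (a, z) + e)
    (hcB : ∀ y ∈ B, ∀ z ∈ Ω, c (y, z) ≤ c (b, z) + e) :
    transportCost c (μ + ε • ρ) (μ + ε • ρ') ≤
      transportCost c (μ + ε • Measure.dirac a) (μ + ε • Measure.dirac b) +
        2 * (μ Set.univ + ε) * e := by
  have hmass : ∀ ν : Measure E, IsProbabilityMeasure ν →
      (μ + ε • ν) Set.univ = μ Set.univ + ε := fun ν _ => by simp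
  have hdirac : ∀ᵐ x ∂(μ + ε • Measure.dirac a), x ∈ Ω := by
    refine ae_add_measure_iff.2 ⟨hμΩ, Measure.ae_smul_measure ?_ ε⟩
    rw [ae_dirac_eq]
    exact ha
  have hspread_a := transportCost_add_smul_le_dirac (μ := μ) hε₀ hε hc hρ
    (ae_add_measure_iff.2 ⟨hμΩ, Measure.ae_smul_measure hρ'Ω ε⟩) hcA
  have hspread_b := transportCost_add_smul_le_dirac (μ := μ) hε₀ hε hc hρ' hdirac hcB
  rw [hmass ρ' inferInstance] at hspread_a
  rw [hmass _ inferInstance, transportCost_comm hc_symm (μ + ε • Measure.dirac b)] at hspread_b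
  calc transportCost c (μ + ε • ρ) (μ + ε • ρ')
      ≤ transportCost c (μ + ε • ρ') (μ + ε • Measure.dirac a) + (μ Set.univ + ε) * e := by
        rwa [transportCost_comm hc_symm (μ + ε • ρ')]
    _ ≤ transportCost c (μ + ε • Measure.dirac a) (μ + ε • Measure.dirac b) +
          (μ Set.univ + ε) * e + (μ Set.univ + ε) * e := add_le_add hspread_b le_rfl
    _ = _ := by ring

theorem tsum_measure_eq_one {X : Type*} [MeasurableSpace X] {ν : Measure X}
    [IsProbabilityMeasure ν] {A : ℕ → Set X} (hm : ∀ i, MeasurableSet (A i))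
    (hd : Pairwise (Function.onFun Disjoint A)) (hA : ν (⋃ i, A i)ᶜ = 0) :
    ∑' i, ν (A i) = 1 := by
  rw [← measure_iUnion hd hm, ← prob_compl_eq_zero_iff (MeasurableSet.iUnion hm), hA]

open ProbabilityTheory in
theorem Measure.sum_smul_add_smul_cond {X : Type*} [MeasurableSpace X]
    (μ ν : Measure X) [IsProbabilityMeasure ν] (ε : ℝ≥0∞) {A : ℕ → Set X}
    (hm : ∀ i, MeasurableSet (A i)) (hd : Pairwise (Function.onFun Disjoint A))
    (hA : ν (⋃ i, A i)ᶜ = 0) :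
    Measure.sum (fun i => ν (A i) • (μ + ε • ν[|A i])) = μ + ε • ν := by
  ext s hs
  have hdisj : Pairwise (Function.onFun Disjoint fun i => A i ∩ s) :=
    hd.mono fun i j h => h.mono Set.inter_subset_left Set.inter_subset_left
  simp only [Measure.sum_apply _ hs, Measure.smul_apply, Measure.add_apply, smul_eq_mul]
  calc ∑' i, ν (A i) * (μ s + ε * ν[s|A i])
      = ∑' i, (ν (A i) * μ s + ε * ν (A i ∩ s)) := tsum_congr fun i => by
        rw [mul_add, mul_left_comm, mul_comm (ν (A i)) (ν[s|A i]), cond_mul_eq_inter (hm i)]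
    _ = (∑' i, ν (A i)) * μ s + ε * ν ((⋃ i, A i) ∩ s) := by
        rw [ENNReal.tsum_add, ENNReal.tsum_mul_right, ENNReal.tsum_mul_left, Set.iUnion_inter,
          measure_iUnion hdisj fun i => (hm i).inter hs]
    _ = μ s + ε * ν s := by
        rw [tsum_measure_eq_one hm hd hA, one_mul, Set.inter_comm, measure_inter_conull hA]

end MeasureTheory

section Metric

variable {X : Type*} [PseudoMetricSpace X]

theorem msupport_eq_support [MeasurableSpace X] (ν : Measure X) : msupport ν = ν.support := by
  ext x
  simp [msupport, Metric.nhds_basis_ball.mem_measureSupport, pos_iff_ne_zero]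

theorem Real.exists_pos_rpow_add_le {p : ℝ} (hp : 0 ≤ p) (C : ℝ) {e : ℝ} (he : 0 < e) :
    ∃ δ > 0, ∀ s ∈ Set.Icc 0 C, (s + δ) ^ p ≤ s ^ p + e := by
  obtain ⟨δ, hδ, hδe⟩ := Metric.uniformContinuousOn_iff_le.1
    (isCompact_Icc.uniformContinuousOn_of_continuous
      ((Real.continuous_rpow_const hp).continuousOn (s := Set.Icc 0 (C + 1)))) e he
  refine ⟨min δ 1, by positivity, fun s ⟨hs₀, hsC⟩ => ?_⟩
  have hclose : dist (s + min δ 1) s ≤ δ := by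
    rw [Real.dist_eq, add_sub_cancel_left, abs_of_pos (by positivity)]
    exact min_le_left _ _
  have := hδe _ ⟨by positivity, by linarith [min_le_right δ 1]⟩ s ⟨hs₀, by linarith⟩ hclose
  rw [Real.dist_eq, abs_le] at this
  linarith [this.2]

theorem exists_pos_forall_dist_rpow_le {p : ℝ} (hp : 0 ≤ p) {Ω : Set X}
    (hΩ : Bornology.IsBounded Ω) {e : ℝ} (he : 0 < e) :
    ∃ δ > 0, ∀ a ∈ Ω, ∀ x ∈ Metric.ball a δ, ∀ z ∈ Ω,
      ENNReal.ofReal (dist x z ^ p) ≤ ENNReal.ofReal (dist a z ^ p) + ENNReal.ofReal e := by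
  obtain ⟨C, hC⟩ := Metric.isBounded_iff.1 hΩ
  obtain ⟨δ, hδ, hδp⟩ := Real.exists_pos_rpow_add_le hp C he
  refine ⟨δ, hδ, fun a ha x hx z hz => ?_⟩
  have hxz : dist x z ≤ dist a z + δ := by
    linarith [dist_triangle_left x z a, Metric.mem_ball'.1 hx, dist_comm x a]
  calc ENNReal.ofReal (dist x z ^ p)
      ≤ ENNReal.ofReal (dist a z ^ p + e) := ENNReal.ofReal_le_ofReal <|
        (Real.rpow_le_rpow dist_nonneg hxz hp).trans (hδp _ ⟨dist_nonneg, hC ha hz⟩)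
    _ ≤ ENNReal.ofReal (dist a z ^ p) + ENNReal.ofReal e := ENNReal.ofReal_add_le

theorem exists_partition_subset_ball [MeasurableSpace X] [OpensMeasurableSpace X]
    [TopologicalSpace.SeparableSpace X] {s : Set X} (hs : MeasurableSet s) (hne : s.Nonempty)
    {δ : ℝ} (hδ : 0 < δ) :
    ∃ (u : ℕ → X) (A : ℕ → Set X), (∀ i, u i ∈ s) ∧ (∀ i, MeasurableSet (A i)) ∧
      Pairwise (Function.onFun Disjoint A) ∧ ⋃ i, A i = s ∧
      ∀ i, A i ⊆ s ∩ Metric.ball (u i) δ := by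
  have : Nonempty s := hne.to_subtype
  obtain ⟨v, hv⟩ := TopologicalSpace.exists_dense_seq s
  refine ⟨fun i => v i, disjointed fun i => s ∩ Metric.ball (v i) δ, fun i => (v i).2,
    MeasurableSet.disjointed fun i => hs.inter Metric.isOpen_ball.measurableSet,
    disjoint_disjointed _, ?_, fun i => disjointed_subset _ i⟩
  rw [iUnion_disjointed, ← Set.inter_iUnion, Set.inter_eq_left]
  intro x hx
  obtain ⟨i, hi⟩ := Metric.denseRange_iff.1 hv ⟨x, hx⟩ δ hδ
  exact Set.mem_iUnion.2 ⟨i, hi⟩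

open ProbabilityTheory in
theorem exists_ball_decomposition [MeasurableSpace X] [OpensMeasurableSpace X]
    [SecondCountableTopology X] (μ ν : Measure X) [IsProbabilityMeasure ν] (ε : ℝ≥0∞) {δ : ℝ}
    (hδ : 0 < δ) :
    ∃ (u : ℕ → X) (A : ℕ → Set X), ∑' i, ν (A i) = 1 ∧
      Measure.sum (fun i => ν (A i) • (μ + ε • ν[|A i])) = μ + ε • ν ∧
      ∀ i, u i ∈ ν.support ∧ ∀ᵐ x ∂ν[|A i], x ∈ ν.support ∩ Metric.ball (u i) δ := by
  obtain ⟨u, A, hu, hm, hd, hA, hA_ball⟩ := exists_partition_subset_ball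
    Measure.isClosed_support.measurableSet (Measure.nonempty_support (NeZero.ne ν)) hδ
  have hA_conull : ν (⋃ i, A i)ᶜ = 0 := hA ▸ Measure.measure_compl_support
  exact ⟨u, A, tsum_measure_eq_one hm hd hA_conull,
    Measure.sum_smul_add_smul_cond μ ν ε hm hd hA_conull,
    fun i => ⟨hu i, (ae_cond_mem (hm i)).mono fun _ hx => hA_ball i hx⟩⟩

end Metric

theorem ENNReal.le_of_forall_pos_le_add_mul {a b K : ℝ≥0∞} (hK : K ≠ ∞)
    (h : ∀ e : ℝ, 0 < e → a ≤ b + K * ENNReal.ofReal e) : a ≤ b := by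
  refine ENNReal.le_of_forall_pos_le_add fun η hη _ => ?_
  obtain ⟨n, hn, hnK⟩ := ENNReal.exists_nnreal_pos_mul_lt hK (ENNReal.coe_ne_zero.2 hη.ne')
  calc a ≤ b + K * ENNReal.ofReal n := h n hn
    _ ≤ b + η := by
        rw [ENNReal.ofReal_coe_nnreal, mul_comm]
        exact add_le_add_right hnK.le _

theorem WpCost_eq_transportCost {E : Type*} [MeasurableSpace E] [PseudoMetricSpace E] (p : ℝ)
    (μ₁ μ₂ : Measure E) :
    WpCost p μ₁ μ₂ = transportCost (fun z : E × E => ENNReal.ofReal (dist z.1 z.2 ^ p)) μ₁ μ₂ :=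
  rfl

/-- Dirac reduction: `W_p^p(μ+εν₊, μ+εν₋)` is bounded by the supremum of
`W_p^p(μ+εδ_{x₀}, μ+εδ_{x₁})` over `x₀ ∈ supp ν₊`, `x₁ ∈ supp ν₋`. -/
theorem dirac_reduction {k : ℕ} (p : ℝ) (hp : 1 ≤ p)
    (Ω : Set (EuclideanSpace ℝ (Fin k))) (hΩ : IsCompact Ω)
    (μ νp νm : Measure (EuclideanSpace ℝ (Fin k))) [IsFiniteMeasure μ]
    (hμ : μ Ωᶜ = 0) (hνp : νp Ωᶜ = 0) (hνm : νm Ωᶜ = 0)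
    (hνp1 : νp Set.univ = 1) (hνm1 : νm Set.univ = 1) (ε : ℝ) (hε : 0 < ε) :
    WpCost p (μ + ENNReal.ofReal ε • νp) (μ + ENNReal.ofReal ε • νm) ≤
      ⨆ (x₀ ∈ msupport νp) (x₁ ∈ msupport νm),
        WpCost p (μ + ENNReal.ofReal ε • Measure.dirac x₀)
          (μ + ENNReal.ofReal ε • Measure.dirac x₁) := by
  have : IsProbabilityMeasure νp := ⟨hνp1⟩
  have : IsProbabilityMeasure νm := ⟨hνm1⟩
  have hsupp : ∀ ν : Measure (EuclideanSpace ℝ (Fin k)), ν Ωᶜ = 0 → ν.support ⊆ Ω :=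
    fun ν hν => Measure.support_subset_of_isClosed hΩ.isClosed (mem_ae_iff.2 hν)
  simp only [WpCost_eq_transportCost, msupport_eq_support]
  refine ENNReal.le_of_forall_pos_le_add_mul (K := 2 * (μ Set.univ + ENNReal.ofReal ε))
    (by finiteness) fun e he => ?_
  obtain ⟨δ, hδ, hcost⟩ := exists_pos_forall_dist_rpow_le (p := p) (by linarith) hΩ.isBounded he
  obtain ⟨a, A, hA_sum, hA, hA_ball⟩ := exists_ball_decomposition μ νp (ENNReal.ofReal ε) hδ
  obtain ⟨b, B, hB_sum, hB, hB_ball⟩ := exists_ball_decomposition μ νm (ENNReal.ofReal ε) hδ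
  rw [← hA, ← hB]
  refine (transportCost_sum_smul_sum_smul_le hA_sum hB_sum _ _).trans
    (iSup₂_le fun i hi => iSup₂_le fun j hj => ?_)
  have := ProbabilityTheory.cond_isProbabilityMeasure hi
  have := ProbabilityTheory.cond_isProbabilityMeasure hj
  have ha : a i ∈ Ω := hsupp νp hνp (hA_ball i).1
  calc _ ≤ _ := transportCost_add_smul_le_add_smul_dirac (by fun_prop)
        (fun x y => by rw [dist_comm]) (ENNReal.ofReal_pos.2 hε).ne' ENNReal.ofReal_ne_top
        ((hA_ball i).2.mono fun _ hx => hx.2) ((hB_ball j).2.mono fun _ hx => hx.2) hμ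
        ((hB_ball j).2.mono fun _ hx => hsupp νm hνm hx.1) ha
        (hcost _ ha) (hcost _ (hsupp νm hνm (hB_ball j).1))
    _ ≤ _ := by
        gcongr
        exact le_iSup₂_of_le (a i) (hA_ball i).1 (le_iSup₂_of_le (b j) (hB_ball j).1 le_rfl)
end

section
/- Dominated measure comparison: If μ̂ ≤ μ are positive measures on compact Ω and x₀, x₁ ∈ Ω, then for every ε > 0, W_p(μ+εδ_{x₀}, μ+εδ_{x₁}) ≤ W_p(μ̂+εδ_{x₀}, μ̂+εδ_{x₁}). -/
open MeasureTheory ENNReal NNReal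

/-!
Write `μ = μ̂ + λ` with `λ = μ - μ̂ ≥ 0`. Adding the diagonal coupling of `λ` (which moves no mass,
hence costs nothing) to any coupling of `μ̂ + εδ_{x₀}` and `μ̂ + εδ_{x₁}` gives a coupling of
`μ + εδ_{x₀}` and `μ + εδ_{x₁}` with the same cost.
-/

section WassersteinAdd

variable {E : Type*} [MeasurableSpace E] [PseudoMetricSpace E] {p : ℝ}

theorem lintegral_dist_rpow_map_diag_eq_zero (hp : 0 < p) (η : Measure E) :
    ∫⁻ z, ENNReal.ofReal (dist z.1 z.2 ^ p) ∂(η.map fun x => (x, x)) = 0 := by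
  refine nonpos_iff_eq_zero.mp ((lintegral_map_le _ _).trans_eq ?_)
  simp [Real.zero_rpow hp.ne']

theorem WpCost_add_add_le (hp : 0 < p) (ν₁ ν₂ η : Measure E) :
    WpCost p (ν₁ + η) (ν₂ + η) ≤ WpCost p ν₁ ν₂ := by
  refine le_iInf₂ fun π hπ => ?_
  have hdiag : Measurable fun x : E => (x, x) := measurable_id.prodMk measurable_id
  set D : Measure (E × E) := η.map fun x => (x, x)
  have hD₁ : D.map Prod.fst = η := by
    rw [Measure.map_map measurable_fst hdiag]; exact Measure.map_id
  have hD₂ : D.map Prod.snd = η := by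
    rw [Measure.map_map measurable_snd hdiag]; exact Measure.map_id
  have hcoupling : (π + D).map Prod.fst = ν₁ + η ∧ (π + D).map Prod.snd = ν₂ + η := by
    rw [Measure.map_add _ _ measurable_fst, Measure.map_add _ _ measurable_snd, hπ.1, hπ.2,
      hD₁, hD₂]
    exact ⟨rfl, rfl⟩
  calc WpCost p (ν₁ + η) (ν₂ + η)
      ≤ ∫⁻ z, ENNReal.ofReal (dist z.1 z.2 ^ p) ∂(π + D) := iInf₂_le (π + D) hcoupling
    _ = ∫⁻ z, ENNReal.ofReal (dist z.1 z.2 ^ p) ∂π := by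
      rw [lintegral_add_measure, lintegral_dist_rpow_map_diag_eq_zero hp, add_zero]

theorem Wp_add_add_le (hp : 0 < p) (ν₁ ν₂ η : Measure E) :
    Wp p (ν₁ + η) (ν₂ + η) ≤ Wp p ν₁ ν₂ :=
  ENNReal.rpow_le_rpow (WpCost_add_add_le hp ν₁ ν₂ η) (by positivity)

end WassersteinAdd

theorem dominated_comparison_general {k : ℕ} (p : ℝ) (hp : 1 ≤ p)
    (μ μhat : Measure (EuclideanSpace ℝ (Fin k))) [IsFiniteMeasure μ]
    (hle : μhat ≤ μ)
    (x₀ x₁ : EuclideanSpace ℝ (Fin k))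
    (ε : ℝ) :
    Wp p (μ + ENNReal.ofReal ε • Measure.dirac x₀)
        (μ + ENNReal.ofReal ε • Measure.dirac x₁) ≤
      Wp p (μhat + ENNReal.ofReal ε • Measure.dirac x₀)
        (μhat + ENNReal.ofReal ε • Measure.dirac x₁) := by
  have : IsFiniteMeasure μhat := isFiniteMeasure_of_le μ hle
  have hsplit (ν : Measure (EuclideanSpace ℝ (Fin k))) : μhat + ν + (μ - μhat) = μ + ν := by
    rw [add_right_comm, add_comm μhat, Measure.sub_add_cancel_of_le hle]
  simpa only [hsplit] using Wp_add_add_le (by linarith)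
    (μhat + ENNReal.ofReal ε • Measure.dirac x₀) (μhat + ENNReal.ofReal ε • Measure.dirac x₁)
    (μ - μhat)

/-- Dominated measure comparison: if `μ̂ ≤ μ`, then
`W_p(μ+εδ_{x₀}, μ+εδ_{x₁}) ≤ W_p(μ̂+εδ_{x₀}, μ̂+εδ_{x₁})`. -/
theorem dominated_comparison {k : ℕ} (p : ℝ) (hp : 1 ≤ p)
    (Ω : Set (EuclideanSpace ℝ (Fin k))) (hΩ : IsCompact Ω)
    (μ μhat : Measure (EuclideanSpace ℝ (Fin k))) [IsFiniteMeasure μ]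
    (hμ : μ Ωᶜ = 0) (hle : μhat ≤ μ)
    (x₀ x₁ : EuclideanSpace ℝ (Fin k)) (hx₀ : x₀ ∈ Ω) (hx₁ : x₁ ∈ Ω)
    (ε : ℝ) (hε : 0 < ε) :
    Wp p (μ + ENNReal.ofReal ε • Measure.dirac x₀)
        (μ + ENNReal.ofReal ε • Measure.dirac x₁) ≤
      Wp p (μhat + ENNReal.ofReal ε • Measure.dirac x₀)
        (μhat + ENNReal.ofReal ε • Measure.dirac x₁) :=
  dominated_comparison_general p hp μ μhat hle x₀ x₁ ε
end

section
/- Lower bound via piecewise-constant dual functions: Let μ = Σ_{j=1}^m μ_j with supp(μ_i) pairwise disjoint closed sets A_i, ν a neutral measure supported in supp(μ) with ν̄_i := ν(A_i), and z₁,…,z_m ∈ ℝ satisfying z_i − z_j ≤ dist(A_i, A_j)^p for all i, j. Then for every ε > 0, W_p^p(μ + εν₊, μ + εν₋) ≥ ε Σ_i z_i ν̄_i. -/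
/-!
Weak Kantorovich duality: for any coupling `π` and any pair `φ, ψ` with
`φ x - ψ y ≤ |x - y|^p` on the supports, `∫ φ dμ₁ - ∫ ψ dμ₂ = ∫ (φ x - ψ y) dπ ≤ ∫ |x - y|^p dπ`.
Take `φ = ψ` equal to `zᵢ` on `Aᵢ`: the condition holds because `zᵢ - zⱼ ≤ dist(Aᵢ,Aⱼ)^p ≤ |x - y|^p`,
and the contributions of `μ` cancel, leaving `ε Σᵢ zᵢ (ν₊(Aᵢ) - ν₋(Aᵢ))`.
-/

open MeasureTheory ENNReal NNReal

/-- Distance between two sets: `dist(A,B) = inf {|x-y| : x ∈ A, y ∈ B}`. -/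
noncomputable def setDist {E : Type*} [PseudoMetricSpace E] (A B : Set E) : ℝ :=
  sInf ((fun q : E × E => dist q.1 q.2) '' (A ×ˢ B))

theorem setDist_nonneg {E : Type*} [PseudoMetricSpace E] (A B : Set E) : 0 ≤ setDist A B :=
  Real.sInf_nonneg <| by rintro r ⟨q, _, rfl⟩; exact dist_nonneg

theorem setDist_le_dist {E : Type*} [PseudoMetricSpace E] {A B : Set E} {x y : E}
    (hx : x ∈ A) (hy : y ∈ B) : setDist A B ≤ dist x y :=
  csInf_le ⟨0, by rintro r ⟨q, _, rfl⟩; exact dist_nonneg⟩ ⟨(x, y), ⟨hx, hy⟩, rfl⟩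

theorem ofReal_integral_le_lintegral_ofReal {α : Type*} [MeasurableSpace α] {μ : Measure α}
    (f : α → ℝ) : ENNReal.ofReal (∫ a, f a ∂μ) ≤ ∫⁻ a, ENNReal.ofReal (f a) ∂μ := by
  by_cases hf : Integrable f μ
  · rw [integral_eq_lintegral_pos_part_sub_lintegral_neg_part hf]
    calc ENNReal.ofReal (_ - _) ≤ ENNReal.ofReal (∫⁻ a, ENNReal.ofReal (f a) ∂μ).toReal :=
          ENNReal.ofReal_le_ofReal (sub_le_self _ toReal_nonneg)
      _ ≤ _ := ofReal_toReal_le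
  · simp [integral_undef hf]

section Duality

variable {E : Type*} [MeasurableSpace E] [PseudoMetricSpace E] {p : ℝ} {μ₁ μ₂ : Measure E}

theorem ofReal_integral_sub_integral_le_wpCost {φ ψ : E → ℝ} (hφ : Integrable φ μ₁)
    (hψ : Integrable ψ μ₂) {S₁ S₂ : Set E} (hS₁ : ∀ᵐ x ∂μ₁, x ∈ S₁) (hS₂ : ∀ᵐ y ∂μ₂, y ∈ S₂)
    (hφψ : ∀ x ∈ S₁, ∀ y ∈ S₂, φ x - ψ y ≤ dist x y ^ p) :
    ENNReal.ofReal (∫ x, φ x ∂μ₁ - ∫ y, ψ y ∂μ₂) ≤ WpCost p μ₁ μ₂ := by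
  refine le_iInf₂ fun π ⟨h₁, h₂⟩ => ?_
  subst h₁ h₂
  have hφπ : Integrable (fun q : E × E => φ q.1) π := hφ.comp_measurable measurable_fst
  have hψπ : Integrable (fun q : E × E => ψ q.2) π := hψ.comp_measurable measurable_snd
  have hsupp : ∀ᵐ q ∂π, q.1 ∈ S₁ ∧ q.2 ∈ S₂ :=
    (ae_of_ae_map measurable_fst.aemeasurable hS₁).and
      (ae_of_ae_map measurable_snd.aemeasurable hS₂)
  calc ENNReal.ofReal (∫ x, φ x ∂π.map Prod.fst - ∫ y, ψ y ∂π.map Prod.snd)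
      = ENNReal.ofReal (∫ q, (φ q.1 - ψ q.2) ∂π) := by
        rw [integral_map measurable_fst.aemeasurable hφ.aestronglyMeasurable,
          integral_map measurable_snd.aemeasurable hψ.aestronglyMeasurable,
          integral_sub hφπ hψπ]
    _ ≤ ∫⁻ q, ENNReal.ofReal (φ q.1 - ψ q.2) ∂π := ofReal_integral_le_lintegral_ofReal _
    _ ≤ ∫⁻ q, ENNReal.ofReal (dist q.1 q.2 ^ p) ∂π := lintegral_mono_ae <| hsupp.mono
        fun q hq => ENNReal.ofReal_le_ofReal (hφψ _ hq.1 _ hq.2)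

end Duality

section PiecewiseConst

noncomputable def piecewiseConst {E ι : Type*} [Fintype ι] (A : ι → Set E) (z : ι → ℝ) (x : E) :
    ℝ :=
  ∑ i, (A i).indicator (fun _ => z i) x

variable {E ι : Type*} [Fintype ι] {A : ι → Set E} (z : ι → ℝ)

theorem piecewiseConst_eq_of_mem (hdisj : Pairwise (Function.onFun Disjoint A)) {i : ι} {x : E}
    (hx : x ∈ A i) : piecewiseConst A z x = z i := by
  classical
  rw [piecewiseConst, Finset.sum_eq_single i (fun j _ hji => ?_) (by simp),
    Set.indicator_of_mem hx]
  exact Set.indicator_of_notMem (Set.disjoint_left.mp (hdisj hji.symm) hx) _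

theorem piecewiseConst_sub_le_dist_rpow [PseudoMetricSpace E] {p : ℝ} (hp : 0 ≤ p)
    (hdisj : Pairwise (Function.onFun Disjoint A))
    (hz : ∀ i j, z i - z j ≤ setDist (A i) (A j) ^ p) :
    ∀ x ∈ ⋃ i, A i, ∀ y ∈ ⋃ i, A i,
      piecewiseConst A z x - piecewiseConst A z y ≤ dist x y ^ p := by
  simp only [Set.mem_iUnion]
  rintro x ⟨i, hx⟩ y ⟨j, hy⟩
  rw [piecewiseConst_eq_of_mem z hdisj hx, piecewiseConst_eq_of_mem z hdisj hy]
  exact (hz i j).trans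
    (Real.rpow_le_rpow (setDist_nonneg _ _) (setDist_le_dist hx hy) hp)

variable [MeasurableSpace E] (ν : Measure E) [IsFiniteMeasure ν]

theorem integrable_piecewiseConst (hA : ∀ i, MeasurableSet (A i)) :
    Integrable (piecewiseConst A z) ν := by
  unfold piecewiseConst
  exact integrable_finsetSum _ fun i _ => (integrable_const (z i)).indicator (hA i)

theorem integral_piecewiseConst (hA : ∀ i, MeasurableSet (A i)) :
    ∫ x, piecewiseConst A z x ∂ν = ∑ i, z i * ν.real (A i) := by
  unfold piecewiseConst
  rw [integral_finsetSum _ fun i _ => (integrable_const (z i)).indicator (hA i)]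
  simp_rw [integral_indicator_const _ (hA _), smul_eq_mul, mul_comm]

end PiecewiseConst

theorem piecewise_dual_lower_bound_general {k : ℕ} (p : ℝ) (hp : 1 ≤ p) (m : ℕ)
    (A : Fin m → Set (EuclideanSpace ℝ (Fin k)))
    (hclosed : ∀ i, IsClosed (A i)) (hdisj : Pairwise (Function.onFun Disjoint A))
    (μi : Fin m → Measure (EuclideanSpace ℝ (Fin k)))
    [∀ i, IsFiniteMeasure (μi i)] (hμsupp : ∀ i, μi i (A i)ᶜ = 0)
    (νp νm : Measure (EuclideanSpace ℝ (Fin k)))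
    [IsFiniteMeasure νp] [IsFiniteMeasure νm]
    (hνp : νp (⋃ i, A i)ᶜ = 0) (hνm : νm (⋃ i, A i)ᶜ = 0)
    (nub : Fin m → ℝ) (hnub : ∀ i, nub i = (νp (A i)).toReal - (νm (A i)).toReal)
    (z : Fin m → ℝ) (hz : ∀ i j, z i - z j ≤ setDist (A i) (A j) ^ p)
    (ε : ℝ) (hε : 0 < ε) :
    ENNReal.ofReal (ε * ∑ i, z i * nub i) ≤
      WpCost p ((∑ i, μi i) + ENNReal.ofReal ε • νp)
        ((∑ i, μi i) + ENNReal.ofReal ε • νm) := by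
  have hA i : MeasurableSet (A i) := (hclosed i).measurableSet
  have : IsFiniteMeasure (ENNReal.ofReal ε • νp) := νp.smul_finite ofReal_ne_top
  have : IsFiniteMeasure (ENNReal.ofReal ε • νm) := νm.smul_finite ofReal_ne_top
  have hμ : ∀ᵐ x ∂(∑ i, μi i), x ∈ ⋃ i, A i := by
    refine mem_ae_iff.mpr ?_
    simp only [Measure.coe_finsetSum, Finset.sum_apply]
    exact Finset.sum_eq_zero fun i _ =>
      measure_mono_null (Set.compl_subset_compl.mpr (Set.subset_iUnion A i)) (hμsupp i)
  have hsupp {ν : Measure _} (hν : ν (⋃ i, A i)ᶜ = 0) :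
      ∀ᵐ x ∂((∑ i, μi i) + ENNReal.ofReal ε • ν), x ∈ ⋃ i, A i :=
    ae_add_measure_iff.mpr ⟨hμ, Measure.ae_smul_measure (mem_ae_iff.mpr hν) _⟩
  have hint (ν : Measure _) [IsFiniteMeasure ν] := integrable_piecewiseConst z ν hA
  have hgap : ∫ x, piecewiseConst A z x ∂((∑ i, μi i) + ENNReal.ofReal ε • νp) -
      ∫ x, piecewiseConst A z x ∂((∑ i, μi i) + ENNReal.ofReal ε • νm) =
      ε * ∑ i, z i * nub i := by
    rw [integral_add_measure (hint _) (hint _), integral_add_measure (hint _) (hint _),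
      add_sub_add_left_eq_sub, integral_smul_measure, integral_smul_measure,
      integral_piecewiseConst z νp hA, integral_piecewiseConst z νm hA, toReal_ofReal hε.le,
      smul_eq_mul, smul_eq_mul, ← mul_sub, ← Finset.sum_sub_distrib]
    simp_rw [hnub, mul_sub, measureReal_def]
  rw [← hgap]
  exact ofReal_integral_sub_integral_le_wpCost (hint _) (hint _) (hsupp hνp) (hsupp hνm)
    (piecewiseConst_sub_le_dist_rpow z (zero_le_one.trans hp) hdisj hz)

/-- Lower bound via piecewise-constant dual functions:
`W_p^p(μ+εν₊, μ+εν₋) ≥ ε Σᵢ zᵢ ν̄ᵢ` whenever `zᵢ - zⱼ ≤ dist(Aᵢ,Aⱼ)^p`. -/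
theorem piecewise_dual_lower_bound {k : ℕ} (p : ℝ) (hp : 1 ≤ p) (m : ℕ)
    (A : Fin m → Set (EuclideanSpace ℝ (Fin k)))
    (hclosed : ∀ i, IsClosed (A i)) (hdisj : Pairwise (Function.onFun Disjoint A))
    (μi : Fin m → Measure (EuclideanSpace ℝ (Fin k)))
    [∀ i, IsFiniteMeasure (μi i)] (hμsupp : ∀ i, μi i (A i)ᶜ = 0)
    (νp νm : Measure (EuclideanSpace ℝ (Fin k)))
    [IsFiniteMeasure νp] [IsFiniteMeasure νm]
    (hνp : νp (⋃ i, A i)ᶜ = 0) (hνm : νm (⋃ i, A i)ᶜ = 0)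
    (hbal : νp Set.univ = νm Set.univ)
    (nub : Fin m → ℝ) (hnub : ∀ i, nub i = (νp (A i)).toReal - (νm (A i)).toReal)
    (z : Fin m → ℝ) (hz : ∀ i j, z i - z j ≤ setDist (A i) (A j) ^ p)
    (ε : ℝ) (hε : 0 < ε) :
    ENNReal.ofReal (ε * ∑ i, z i * nub i) ≤
      WpCost p ((∑ i, μi i) + ENNReal.ofReal ε • νp)
        ((∑ i, μi i) + ENNReal.ofReal ε • νm) :=
  piecewise_dual_lower_bound_general p hp m A hclosed hdisj μi hμsupp νp νm hνp hνm nub hnub z hz ε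
    hε
end
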